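/- arXiv:1710.02354 — 3 statements merged into one kernel-verified Lean document; each statement's English description precedes it below -/
import Mathlib

section
/- Let M be a prime and χ a nontrivial Dirichlet character modulo M with complex values (so χ(u) = 0 for u = 0 in ℤ/Mℤ). Let a, r1, r2 ∈ ℤ/Mℤ with a ≠ 0 and a·r2 ≠ r1. Then ∑_{x ∈ ℤ/Mℤ} χ(a·x + r1) · conj(χ(x + r2)) = −χ(a), where conj denotes complex conjugation. -/
/-!
Put `c = r1 - a * r2 ≠ 0`. After the shift `x ↦ x - r2` and `conj (χ y) = χ y⁻¹`, the summand is
`χ ((a * y + c) * y⁻¹) = χ (a + c * y⁻¹)` for `y ≠ 0`, while it vanishes at `y = 0`. With the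
convention `0⁻¹ = 0`, the Möbius map `y ↦ a + c * y⁻¹` permutes the whole field (sending `0` to `a`),
so `∑ y, χ (a + c * y⁻¹) = ∑ z, χ z = 0`, and the sum in question is this minus its `y = 0` term `χ a`.
-/

namespace MulChar

variable {F R : Type*} [Field F] [Fintype F] [CommRing R] [IsDomain R]

lemma sum_apply_add_mul_inv_eq_zero {χ : MulChar F R} (hχ : χ ≠ 1) (a : F) {c : F} (hc : c ≠ 0) :
    ∑ y, χ (a + c * y⁻¹) = 0 := by
  have hbij : Function.Bijective fun y : F => a + c * y⁻¹ :=
    (add_right_injective a).bijective_of_finite.comp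
      ((mulLeft_bijective₀ c hc).comp inv_involutive.bijective)
  rw [hbij.sum_comp χ]
  exact sum_eq_zero_of_ne_one hχ

lemma sum_apply_mul_add_mul_apply_inv_eq_neg {χ : MulChar F R} (hχ : χ ≠ 1) (a : F) {c : F}
    (hc : c ≠ 0) : ∑ y, χ (a * y + c) * χ y⁻¹ = -χ a := by
  classical
  have hterm (y : F) : χ (a * y + c) * χ y⁻¹ = χ (a + c * y⁻¹) - if y = 0 then χ a else 0 := by
    rcases eq_or_ne y 0 with rfl | hy
    · simp
    · rw [if_neg hy, sub_zero, ← map_mul]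
      congr 1
      field_simp
  simp only [hterm, Finset.sum_sub_distrib, sum_apply_add_mul_inv_eq_zero hχ a hc,
    Finset.sum_ite_eq', Finset.mem_univ, if_true, zero_sub]

end MulChar

theorem char_sum_mobius_generic_general
    (M : ℕ) (hM : M.Prime) (χ : DirichletCharacter ℂ M) (hχ : χ ≠ 1)
    (a r1 r2 : ZMod M) (h : a * r2 ≠ r1) :
    haveI : NeZero M := ⟨hM.ne_zero⟩
    ∑ x : ZMod M, χ (a * x + r1) * (starRingEnd ℂ) (χ (x + r2)) = -χ a := by
  have : NeZero M := ⟨hM.ne_zero⟩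
  have : Fact M.Prime := ⟨hM⟩
  have hc : r1 - a * r2 ≠ 0 := sub_ne_zero.mpr h.symm
  calc ∑ x : ZMod M, χ (a * x + r1) * (starRingEnd ℂ) (χ (x + r2))
      = ∑ y : ZMod M, χ (a * y + (r1 - a * r2)) * χ y⁻¹ :=
        Fintype.sum_equiv (Equiv.addRight r2) _ _ fun x => by
          rw [Equiv.coe_addRight, ← RCLike.star_def, MulChar.star_apply', MulChar.inv_apply']
          ring_nf
    _ = -χ a := MulChar.sum_apply_mul_add_mul_apply_inv_eq_neg hχ a hc

/-- For `M` prime, `χ` a nontrivial Dirichlet character mod `M`, `a ≠ 0` and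
`a·r2 ≠ r1` in `ℤ/Mℤ`, one has `∑_x χ(a x + r1) conj(χ(x + r2)) = -χ(a)`. -/
theorem char_sum_mobius_generic
    (M : ℕ) (hM : M.Prime) (χ : DirichletCharacter ℂ M) (hχ : χ ≠ 1)
    (a r1 r2 : ZMod M) (ha : a ≠ 0) (h : a * r2 ≠ r1) :
    haveI : NeZero M := ⟨hM.ne_zero⟩
    ∑ x : ZMod M, χ (a * x + r1) * (starRingEnd ℂ) (χ (x + r2)) = -χ a :=
  char_sum_mobius_generic_general M hM χ hχ a r1 r2 h
end

section
/- Let M be a prime, let χ be a nontrivial Dirichlet character modulo M, and write χ̄ for the complex-conjugate character. For x ∈ ℤ/Mℤ write e_M(x) = exp(2πi·x̃/M), where x̃ ∈ ℤ is any lift of x. Define the Kloosterman sum S(u, a; M) = ∑_{β ∈ (ℤ/Mℤ)ˣ} e_M(β·u + β^{-1}·a) and the Gauss sum g(χ̄) = ∑_{a ∈ ℤ/Mℤ} χ̄(a) e_M(a). Then for all u, v ∈ ℤ/Mℤ: ∑_{a ∈ ℤ/Mℤ} χ̄(a) · S(u, a; M) · e_M(a·v) = g(χ̄) · ∑_{β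 ∈ (ℤ/Mℤ)ˣ} χ(β^{-1} + v) · e_M(β·u). -/
/-!
Expanding the Kloosterman sum and exchanging the two summations, the sum over `a` becomes, for
each unit `β`, the twisted Gauss sum `∑_a χ̄(a) e_M(a (β⁻¹ + v))`. Modulo a prime every nontrivial
character is primitive, and for a primitive character `∑_a χ̄(a) e_M(a b) = χ(b) g(χ̄)` holds for
every `b`, including the non-units, where both sides vanish.
-/

open Complex

/-- The standard additive character `e_q(x) = exp(2πi·x̃/q)` on `ℤ/qℤ`,
evaluated at the canonical lift `x̃ = x.val`. -/
noncomputable def eZMod (q : ℕ) (x : ZMod q) : ℂ :=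
  Complex.exp (2 * Real.pi * Complex.I * (x.val : ℂ) / q)

lemma eZMod_eq_stdAddChar {M : ℕ} [NeZero M] (x : ZMod M) :
    eZMod M x = ZMod.stdAddChar x := by
  conv_rhs => rw [← ZMod.natCast_zmod_val x, ← Int.cast_natCast, ZMod.stdAddChar_coe]
  simp [eZMod]

lemma DirichletCharacter.isPrimitive_of_prime {R : Type*} [CommMonoidWithZero R] {p : ℕ}
    (hp : p.Prime) {χ : DirichletCharacter R p} (hχ : χ ≠ 1) : χ.IsPrimitive := by
  have : NeZero p := ⟨hp.ne_zero⟩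
  exact ((Nat.dvd_prime hp).mp χ.conductor_dvd_level).resolve_left
    fun h ↦ hχ (eq_one_iff_conductor_eq_one.mpr h)

lemma DirichletCharacter.IsPrimitive.sum_mul_addChar_mul {R : Type*} [CommRing R] [IsDomain R]
    {N : ℕ} [NeZero N] {χ : DirichletCharacter R N} (hχ : χ.IsPrimitive)
    (e : AddChar (ZMod N) R) (b : ZMod N) :
    ∑ a, χ a * e (a * b) = χ⁻¹ b * gaussSum χ e := by
  rw [← gaussSum_mulShift_of_isPrimitive e hχ b, gaussSum]
  simp only [AddChar.mulShift_apply, mul_comm b]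

lemma sum_mul_kloosterman_mul_addChar {R R' : Type*} [CommRing R] [Fintype R] [DecidableEq R]
    [CommRing R']
    (ψ : AddChar R R') (f : R → R') (u v : R) :
    ∑ a, f a * (∑ β : Rˣ, ψ (β * u + (β⁻¹ : Rˣ) * a)) * ψ (a * v)
      = ∑ β : Rˣ, ψ (β * u) * ∑ a, f a * ψ (a * ((β⁻¹ : Rˣ) + v)) := by
  simp only [Finset.mul_sum, Finset.sum_mul]
  rw [Finset.sum_comm]
  refine Finset.sum_congr rfl fun β _ => Finset.sum_congr rfl fun a _ => ?_
  rw [AddChar.map_add_eq_mul, mul_add, AddChar.map_add_eq_mul,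
    mul_comm a (β⁻¹ : Rˣ).val, mul_comm a v]
  ring

/-- Unfolding a sum of Kloosterman sums twisted by `χ̄` against an additive character:
`∑_a χ̄(a) S(u, a; M) e_M(a v) = g(χ̄) ∑_{β ∈ (ℤ/Mℤ)ˣ} χ(β⁻¹ + v) e_M(β u)`,
where `g(χ̄)` is the Gauss sum of the conjugate character. -/
theorem kloosterman_twist_unfold
    (M : ℕ) (hM : M.Prime) (χ : DirichletCharacter ℂ M) (hχ : χ ≠ 1) (u v : ZMod M) :
    haveI : NeZero M := ⟨hM.ne_zero⟩
    ∑ a : ZMod M, (starRingEnd ℂ) (χ a) *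
        (∑ β : (ZMod M)ˣ, eZMod M ((β : ZMod M) * u + ((β⁻¹ : (ZMod M)ˣ) : ZMod M) * a)) *
        eZMod M (a * v)
      = (∑ b : ZMod M, (starRingEnd ℂ) (χ b) * eZMod M b) *
        ∑ β : (ZMod M)ˣ, χ (((β⁻¹ : (ZMod M)ˣ) : ZMod M) + v) * eZMod M ((β : ZMod M) * u) := by
  have : NeZero M := ⟨hM.ne_zero⟩
  have hχ' : (star χ).IsPrimitive := by
    refine DirichletCharacter.isPrimitive_of_prime hM ?_
    rwa [MulChar.star_eq_inv, Ne, inv_eq_one]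
  have htwist (b : ZMod M) :
      ∑ a, (starRingEnd ℂ) (χ a) * ZMod.stdAddChar (a * b)
        = χ b * ∑ a, (starRingEnd ℂ) (χ a) * ZMod.stdAddChar a := by
    simp_rw [starRingEnd_apply, ← MulChar.star_apply]
    rw [hχ'.sum_mul_addChar_mul, MulChar.star_eq_inv, inv_inv, gaussSum]
  simp only [eZMod_eq_stdAddChar]
  rw [sum_mul_kloosterman_mul_addChar, Finset.mul_sum]
  refine Finset.sum_congr rfl fun β _ => ?_
  rw [htwist]
  ring
end

section
/- Let c1, c2, n be integers and r1, r2 positive integers with gcd(r1, c1) = 1 and gcd(r2, c2) = 1. Then the number of pairs (y, x) ∈ (ℤ/r1ℤ) × (ℤ/r2ℤ) satisfying the two congruences c1·r1·x ≡ c1·c2·n (mod r2) and c2·r2·y ≡ −c1·c2·n (mod r1) is at most gcd(r1, r2) · gcd(c1, r2) · gcd(c2, r1) · gcd(n, r1·r2). -/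
/-!
The two congruences are independent, so the solution set is a product and it suffices to
count each factor. The solutions of `a * x = b` in `ZMod m` form a coset of the kernel of
multiplication by `a`, which is killed by `gcd(a, m)` and so has at most `gcd(a, m)` elements
in the cyclic group `ZMod m`; moreover `gcd(c * r, m) ≤ gcd(c, m) * gcd(r, m)`. This bounds the
count by `gcd(c2, r1) * gcd(r1, r2) * gcd(c1, r2) * gcd(r1, r2)`. If there is a solution at all,
reducing the second congruence modulo `d = gcd(r1, r2)` gives `d ∣ c1 * c2 * n`, and `d` is
coprime to `c1` and `c2`, so `d ∣ n` and one factor `d` may be replaced by `gcd(n, r1 * r2)`.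
-/

open Finset

theorem Int.gcd_mul_left_le_mul_gcd (c r : ℤ) {m : ℤ} (hm : m ≠ 0) :
    Int.gcd (c * r) m ≤ Int.gcd c m * Int.gcd r m := by
  have hpos := Int.natAbs_pos.2 hm
  simp only [Int.gcd_eq_natAbs, Int.natAbs_mul, Nat.gcd_comm _ m.natAbs]
  exact Nat.le_of_dvd (Nat.mul_pos (Nat.gcd_pos_of_pos_left _ hpos)
    (Nat.gcd_pos_of_pos_left _ hpos)) (gcd_mul_dvd_mul_gcd _ _ _)

theorem AddMonoidHom.card_filter_eq_le_card_filter_eq_zero {G H : Type*} [AddGroup G]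
    [AddGroup H] [Fintype G] [DecidableEq H] (f : G →+ H) (b : H) :
    #{x | f x = b} ≤ #{x | f x = 0} := by
  rcases (univ.filter fun x => f x = b).eq_empty_or_nonempty with hempty | ⟨x₀, hx₀⟩
  · simp [hempty]
  refine card_le_card_of_injOn (· - x₀) (fun x hx => ?_) (fun x _ y _ h => sub_left_injective h)
  simp_all

namespace ZMod

theorem card_filter_mul_eq_zero_le_gcd (m : ℕ) [NeZero m] (a : ℤ) :
    #{x : ZMod m | (a : ZMod m) * x = 0} ≤ Int.gcd a m := by
  have hg : (Int.gcd a m : ZMod m) = a * Int.gcdA a m := by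
    rw [← Int.cast_natCast, Int.gcd_eq_gcd_ab]
    simp
  calc #{x : ZMod m | (a : ZMod m) * x = 0}
      ≤ #{x : ZMod m | Int.gcd a m • x = 0} := by
        refine card_le_card fun x => ?_
        simp only [mem_filter, mem_univ, true_and, nsmul_eq_mul, hg]
        intro hx
        rw [mul_right_comm, hx, zero_mul]
    _ ≤ Int.gcd a m :=
        IsAddCyclic.card_nsmul_eq_zero_le (Int.gcd_pos_of_ne_zero_right _ (by simp [NeZero.ne]))

theorem card_filter_mul_eq_le_gcd (m : ℕ) [NeZero m] (a : ℤ) (b : ZMod m) :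
    #{x : ZMod m | (a : ZMod m) * x = b} ≤ Int.gcd a m :=
  ((AddMonoidHom.mulLeft (a : ZMod m)).card_filter_eq_le_card_filter_eq_zero b).trans
    (card_filter_mul_eq_zero_le_gcd m a)

theorem card_filter_mul_mul_eq_le (m : ℕ) [NeZero m] (c r : ℤ) (b : ZMod m) :
    #{x : ZMod m | (c : ZMod m) * r * x = b} ≤ Int.gcd c m * Int.gcd r m := by
  have h := card_filter_mul_eq_le_gcd m (c * r) b
  push_cast at h
  exact h.trans (Int.gcd_mul_left_le_mul_gcd c r (by simp [NeZero.ne]))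

theorem intCast_dvd_of_mul_eq {m d : ℕ} (hdm : d ∣ m) {a b : ℤ} (hda : (d : ℤ) ∣ a)
    {x : ZMod m} (h : (a : ZMod m) * x = b) : (d : ℤ) ∣ b := by
  have h' := congrArg (castHom hdm (ZMod d)) h
  simp only [map_mul, map_intCast, (intCast_zmod_eq_zero_iff_dvd a d).2 hda, zero_mul] at h'
  exact (intCast_zmod_eq_zero_iff_dvd b d).1 h'.symm

end ZMod

/-- Counting solutions of the pair of linear congruences
`c1·r1·x ≡ c1·c2·n (mod r2)` and `c2·r2·y ≡ -c1·c2·n (mod r1)`: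
assuming `gcd(r1, c1) = gcd(r2, c2) = 1`, the number of pairs
`(y, x) ∈ ℤ/r1ℤ × ℤ/r2ℤ` is at most
`gcd(r1,r2) · gcd(c1,r2) · gcd(c2,r1) · gcd(n, r1·r2)`. -/
theorem congruence_pair_count
    (c1 c2 n : ℤ) (r1 r2 : ℕ) (hr1 : 0 < r1) (hr2 : 0 < r2)
    (hco1 : Int.gcd (r1 : ℤ) c1 = 1) (hco2 : Int.gcd (r2 : ℤ) c2 = 1) :
    haveI : NeZero r1 := ⟨hr1.ne'⟩
    haveI : NeZero r2 := ⟨hr2.ne'⟩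
    (Finset.univ.filter (fun p : ZMod r1 × ZMod r2 =>
        (c1 : ZMod r2) * (r1 : ZMod r2) * p.2 = ((c1 * c2 * n : ℤ) : ZMod r2) ∧
        (c2 : ZMod r1) * (r2 : ZMod r1) * p.1 = ((-(c1 * c2 * n) : ℤ) : ZMod r1))).card
      ≤ Nat.gcd r1 r2 * Int.gcd c1 (r2 : ℤ) * Int.gcd c2 (r1 : ℤ) *
          Int.gcd n ((r1 : ℤ) * (r2 : ℤ)) := by
  have : NeZero r1 := ⟨hr1.ne'⟩
  have : NeZero r2 := ⟨hr2.ne'⟩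
  set Y := univ.filter fun y : ZMod r1 =>
    (c2 : ZMod r1) * (r2 : ZMod r1) * y = ((-(c1 * c2 * n) : ℤ) : ZMod r1)
  set X := univ.filter fun x : ZMod r2 =>
    (c1 : ZMod r2) * (r1 : ZMod r2) * x = ((c1 * c2 * n : ℤ) : ZMod r2)
  have hprod : univ.filter (fun p : ZMod r1 × ZMod r2 =>
      (c1 : ZMod r2) * (r1 : ZMod r2) * p.2 = ((c1 * c2 * n : ℤ) : ZMod r2) ∧
      (c2 : ZMod r1) * (r2 : ZMod r1) * p.1 = ((-(c1 * c2 * n) : ℤ) : ZMod r1)) = Y ×ˢ X := by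
    ext; simp [Y, X, and_comm]
  rw [hprod, card_product]
  obtain hY | ⟨y, hy⟩ := Y.eq_empty_or_nonempty
  · simp [hY]
  have hd1 : (Nat.gcd r1 r2 : ℤ) ∣ r1 := Int.natCast_dvd_natCast.2 (Nat.gcd_dvd_left r1 r2)
  have hd2 : (Nat.gcd r1 r2 : ℤ) ∣ r2 := Int.natCast_dvd_natCast.2 (Nat.gcd_dvd_right r1 r2)
  have hdn : (Nat.gcd r1 r2 : ℤ) ∣ n := by
    have hdN : (Nat.gcd r1 r2 : ℤ) ∣ -(c1 * c2 * n) :=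
      ZMod.intCast_dvd_of_mul_eq (Nat.gcd_dvd_left r1 r2) (hd2.mul_left c2) (x := y)
        (by simpa [Y] using hy)
    have hcop : IsCoprime (Nat.gcd r1 r2 : ℤ) (c1 * c2) :=
      ((Int.isCoprime_iff_gcd_eq_one.2 hco1).of_isCoprime_of_dvd_left hd1).mul_right
        ((Int.isCoprime_iff_gcd_eq_one.2 hco2).of_isCoprime_of_dvd_left hd2)
    exact hcop.dvd_of_dvd_mul_left (dvd_neg.1 hdN)
  have hdle : Nat.gcd r1 r2 ≤ Int.gcd n ((r1 : ℤ) * (r2 : ℤ)) :=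
    Nat.le_of_dvd (Int.gcd_pos_of_ne_zero_right _ (by positivity))
      (Int.dvd_gcd hdn (hd1.mul_right _))
  have hYle := ZMod.card_filter_mul_mul_eq_le r1 c2 r2 ((-(c1 * c2 * n) : ℤ) : ZMod r1)
  have hXle := ZMod.card_filter_mul_mul_eq_le r2 c1 r1 ((c1 * c2 * n : ℤ) : ZMod r2)
  rw [Int.cast_natCast, Int.gcd_natCast_natCast, Nat.gcd_comm] at hYle
  rw [Int.cast_natCast, Int.gcd_natCast_natCast] at hXle
  calc #Y * #X ≤ (Int.gcd c2 r1 * Nat.gcd r1 r2) * (Int.gcd c1 r2 * Nat.gcd r1 r2) :=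
        Nat.mul_le_mul hYle hXle
    _ ≤ (Int.gcd c2 r1 * Nat.gcd r1 r2) * (Int.gcd c1 r2 * Int.gcd n ((r1 : ℤ) * (r2 : ℤ))) := by
        gcongr
    _ = _ := by ring
end
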